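/- Let W be a unitary on a finite-dimensional complex Hilbert space h, ψ* ∈ h a unit vector, P the orthogonal projection onto span{ψ*}, α ∈ ℝ \ πℤ, and M = W(1 + (cos α − 1)P). If x ∈ h is an eigenvector of M with eigenvalue λ satisfying |λ| = 1, then Px = 0 and x is an eigenvector of W orthogonal to ψ*. In particular, if ψ* is cyclic for W then M has no eigenvalue of modulus 1. -/

import Mathlib

/-!
Since `W` is unitary, `M x = λ x` with `|λ| = 1` forces `‖(1 + (cos α - 1) P) x‖ = ‖x‖`. The
left side squared is `‖x‖² - sin² α |⟪ψ, x⟫|²`, so `⟪ψ, x⟫ = 0` and `M x = W x`. Then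
`λ ⟪W^(k+1) ψ, x⟫ = ⟪W^(k+1) ψ, W x⟫ = ⟪W^k ψ, x⟫` shows that `x` is orthogonal to the whole
`W`-orbit of `ψ`, which spans the space when `ψ` is cyclic.
-/

open ContinuousLinearMap

open scoped InnerProductSpace

section

variable {𝕜 E : Type*} [RCLike 𝕜] [NormedAddCommGroup E] [InnerProductSpace 𝕜 E]

theorem norm_sq_add_smul_inner_smul {ψ : E} (hψ : ‖ψ‖ = 1) (s : ℝ) (x : E) :
    ‖x + ((s : 𝕜) - 1) • (⟪ψ, x⟫_𝕜 • ψ)‖ ^ 2 = ‖x‖ ^ 2 + (s ^ 2 - 1) * ‖⟪ψ, x⟫_𝕜‖ ^ 2 := by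
  have hre : RCLike.re ⟪x, ((s : 𝕜) - 1) • (⟪ψ, x⟫_𝕜 • ψ)⟫_𝕜 = (s - 1) * ‖⟪ψ, x⟫_𝕜‖ ^ 2 := by
    rw [inner_smul_right, inner_smul_right, ← inner_conj_symm x ψ, RCLike.mul_conj,
      ← RCLike.ofReal_one, ← RCLike.ofReal_sub, ← RCLike.ofReal_pow, ← RCLike.ofReal_mul,
      RCLike.ofReal_re]
  have hnorm : ‖((s : 𝕜) - 1) • (⟪ψ, x⟫_𝕜 • ψ)‖ = |s - 1| * ‖⟪ψ, x⟫_𝕜‖ := by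
    rw [norm_smul, norm_smul, hψ, mul_one, ← RCLike.ofReal_one, ← RCLike.ofReal_sub,
      RCLike.norm_ofReal]
  rw [@norm_add_sq 𝕜, hre, hnorm, mul_pow, sq_abs]
  ring

theorem inner_eq_zero_of_norm_add_smul_inner_smul_eq {ψ : E} (hψ : ‖ψ‖ = 1) {s : ℝ}
    (hs : s ^ 2 ≠ 1) {x : E} (h : ‖x + ((s : 𝕜) - 1) • (⟪ψ, x⟫_𝕜 • ψ)‖ = ‖x‖) :
    ⟪ψ, x⟫_𝕜 = 0 := by
  have h2 := congrArg (· ^ 2) h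
  simp only [norm_sq_add_smul_inner_smul hψ, add_eq_left, mul_eq_zero, sub_eq_zero, hs,
    false_or, pow_eq_zero_iff two_ne_zero, norm_eq_zero] at h2
  exact h2

theorem eq_zero_of_forall_inner_eq_zero_of_span_eq_top {S : Set E}
    (hS : Submodule.span 𝕜 S = ⊤) {x : E} (hx : ∀ y ∈ S, ⟪y, x⟫_𝕜 = 0) : x = 0 := by
  have hle : Submodule.span 𝕜 S ≤ (𝕜 ∙ x)ᗮ :=
    Submodule.span_le.mpr fun y hy ↦ Submodule.mem_orthogonal_singleton_iff_inner_left.mpr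
      (hx y hy)
  rw [hS] at hle
  exact inner_self_eq_zero.mp
    (Submodule.mem_orthogonal_singleton_iff_inner_left.mp (hle Submodule.mem_top))

variable [CompleteSpace E] {W : E →L[𝕜] E}

theorem inner_eq_zero_of_unitary_comp_eq_smul (hW : W ∈ unitary (E →L[𝕜] E)) {ψ : E}
    (hψ : ‖ψ‖ = 1) {s : ℝ} (hs : s ^ 2 ≠ 1) {x : E} {lam : 𝕜} (hlam : ‖lam‖ = 1)
    (hx : W (x + ((s : 𝕜) - 1) • (⟪ψ, x⟫_𝕜 • ψ)) = lam • x) : ⟪ψ, x⟫_𝕜 = 0 := by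
  refine inner_eq_zero_of_norm_add_smul_inner_smul_eq hψ hs ?_
  rw [← W.norm_map_of_mem_unitary hW, hx, norm_smul, hlam, one_mul]

theorem inner_pow_apply_eq_zero_of_apply_eq_smul (hW : W ∈ unitary (E →L[𝕜] E)) {ψ x : E}
    {lam : 𝕜} (hlam : lam ≠ 0) (hx : W x = lam • x) (hψx : ⟪ψ, x⟫_𝕜 = 0) (k : ℕ) :
    ⟪(W ^ k) ψ, x⟫_𝕜 = 0 := by
  induction k with
  | zero => simpa using hψx
  | succ k ih =>
    have h : lam * ⟪(W ^ (k + 1)) ψ, x⟫_𝕜 = ⟪(W ^ k) ψ, x⟫_𝕜 := by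
      rw [← inner_smul_right, ← hx, pow_succ', mul_apply_eq_comp,
        W.inner_map_map_of_mem_unitary hW]
    exact (mul_eq_zero.mp (h.trans ih)).resolve_left hlam

end

/-- If `x` is an eigenvector of `M = W(1 + (cos α − 1)P)` (with `α ∉ πℤ`)
for an eigenvalue of modulus one, then `P x = 0`, `x` is an eigenvector of `W` and
`x ⊥ ψ*`; in particular if `ψ*` is cyclic for `W` then `M` has no eigenvalue of
modulus one. -/
theorem stmt3 {d : ℕ}
    (W : EuclideanSpace ℂ (Fin d) →L[ℂ] EuclideanSpace ℂ (Fin d))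
    (hW : W ∈ unitary (EuclideanSpace ℂ (Fin d) →L[ℂ] EuclideanSpace ℂ (Fin d)))
    (ψ : EuclideanSpace ℂ (Fin d)) (hψ : ‖ψ‖ = 1)
    (P : EuclideanSpace ℂ (Fin d) →L[ℂ] EuclideanSpace ℂ (Fin d))
    (hP : P = (innerSL ℂ ψ).smulRight ψ)
    (α : ℝ) (hα : ∀ k : ℤ, α ≠ k * Real.pi)
    (M : EuclideanSpace ℂ (Fin d) →L[ℂ] EuclideanSpace ℂ (Fin d))
    (hM : M = W * (1 + (((Real.cos α : ℂ)) - 1) • P)) :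
    (∀ (x : EuclideanSpace ℂ (Fin d)) (lam : ℂ), x ≠ 0 → M x = lam • x → ‖lam‖ = 1 →
        P x = 0 ∧ W x = lam • x ∧ (inner ℂ ψ x : ℂ) = 0) ∧
      (Submodule.span ℂ {y | ∃ k : ℕ, y = (W ^ k) ψ} = ⊤ →
        ∀ lam : ℂ, ‖lam‖ = 1 → ¬∃ x : EuclideanSpace ℂ (Fin d), x ≠ 0 ∧ M x = lam • x) := by
  have hcos : Real.cos α ^ 2 ≠ 1 := by
    rw [← Real.sin_sq_add_cos_sq α, ne_eq, eq_comm, add_eq_right, pow_eq_zero_iff two_ne_zero,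
      Real.sin_eq_zero_iff]
    rintro ⟨k, hk⟩
    exact hα k hk.symm
  have hMx : ∀ x, M x = W (x + ((Real.cos α : ℂ) - 1) • (⟪ψ, x⟫_ℂ • ψ)) := fun x ↦ by
    simp [hM, hP]
  have eigen : ∀ (x : EuclideanSpace ℂ (Fin d)) (lam : ℂ), M x = lam • x → ‖lam‖ = 1 →
      P x = 0 ∧ W x = lam • x ∧ ⟪ψ, x⟫_ℂ = 0 := fun x lam hx hlam ↦ by
    rw [hMx] at hx
    have hψx := inner_eq_zero_of_unitary_comp_eq_smul hW hψ hcos hlam hx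
    rw [hψx, zero_smul, smul_zero, add_zero] at hx
    exact ⟨by simp [hP, hψx], hx, hψx⟩
  refine ⟨fun x lam _ ↦ eigen x lam, ?_⟩
  rintro hspan lam hlam ⟨x, hx, hMxlam⟩
  obtain ⟨-, hWx, hψx⟩ := eigen x lam hMxlam hlam
  refine hx (eq_zero_of_forall_inner_eq_zero_of_span_eq_top hspan ?_)
  rintro _ ⟨k, rfl⟩
  exact inner_pow_apply_eq_zero_of_apply_eq_smul hW (norm_ne_zero_iff.mp (hlam ▸ one_ne_zero))
    hWx hψx k
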